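/- The number of classical parking functions of length n is (n+1)^(n-1). -/

import Mathlib

/-!
Pollak's circular argument. Read `f : Fin n → ZMod (n + 1)` as the preferred spots of `n` cars
on a circular street with `n + 1` spots, and let `E t = parkingExcess f t` be the number of cars
preferring one of the spots `0, …, t - 1` (mod `n + 1`), minus `t`. Then `E` drops by exactly `1`
per turn of the circle, and `f - s` is a parking function iff `E` never goes below `E s` during
the turn starting at `s`. Such a walk has exactly one admissible start per period, its first
minimum; hence each orbit of the translation action of `ZMod (n + 1)` on `Fin n → ZMod (n + 1)`
contains exactly one parking function, and `(n + 1) * #PF = (n + 1) ^ n`.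
-/

open Finset

/-- classical parking function of length `n`. -/
def IsPF (n : ℕ) (a : Fin n → ℕ) : Prop :=
  ∃ σ : Equiv.Perm (Fin n), Monotone (a ∘ σ) ∧ ∀ i : Fin n, (a ∘ σ) i ≤ (i : ℕ)

theorem Nat.card_mul_card_eq_of_existsUnique_vadd {G X : Type*} [AddGroup G] [AddAction G X]
    (P : X → Prop) (h : ∀ x : X, ∃! g : G, P (g +ᵥ x)) :
    Nat.card G * Nat.card {x // P x} = Nat.card X := by
  rw [← Nat.card_prod]
  refine Nat.card_congr (.ofBijective (fun gp => -gp.1 +ᵥ (gp.2 : X)) ⟨?_, fun x => ?_⟩)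
  · rintro ⟨g, x, hx⟩ ⟨g', x', hx'⟩ (heq : -g +ᵥ x = -g' +ᵥ x')
    obtain rfl : g = g' := (h (-g +ᵥ x)).unique (by rwa [vadd_neg_vadd])
      (by rwa [heq, vadd_neg_vadd])
    simpa using heq
  · obtain ⟨g, hg, -⟩ := h x
    exact ⟨(g, ⟨g +ᵥ x, hg⟩), neg_vadd_vadd g x⟩

theorem IsPF.lt {n : ℕ} {a : Fin n → ℕ} (h : IsPF n a) (i : Fin n) : a i < n := by
  obtain ⟨σ, -, hle⟩ := h
  simpa using (hle (σ.symm i)).trans_lt (σ.symm i).isLt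

theorem isPF_iff_le_card_filter_lt {n : ℕ} {a : Fin n → ℕ} :
    IsPF n a ↔ ∀ k ≤ n, k ≤ #{i | a i < k} := by
  constructor
  · rintro ⟨σ, -, hle⟩ k hk
    calc k = #{i : Fin n | (i : ℕ) < k} := by rw [Fin.card_filter_val_lt, min_eq_right hk]
      _ ≤ #{i | a (σ i) < k} := card_le_card fun i => by simpa using (hle i).trans_lt
      _ = #{i | a i < k} := card_equiv σ (by simp)
  · intro h
    refine ⟨Tuple.sort a, Tuple.monotone_sort a, fun i => ?_⟩
    by_contra! hi
    -- only the entries sorted before position `i` can be `≤ i`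
    have hsub : #{j | a (Tuple.sort a j) < i + 1} ≤ #{j : Fin n | (j : ℕ) < i} :=
      card_le_card fun j => by
        simp only [mem_filter, mem_univ, true_and]
        contrapose!
        intro hij
        have := Tuple.monotone_sort a (Fin.le_iff_val_le_val.mpr hij)
        simp only [Function.comp_apply] at this hi
        omega
    have hcard := h (i + 1) i.isLt
    rw [← card_equiv (Tuple.sort a) (s := {j | a (Tuple.sort a j) < i + 1}) (by simp)] at hcard
    rw [Fin.card_filter_val_lt] at hsub
    omega

theorem existsUnique_forall_le_add_of_add_period {m : ℕ} (hm : 0 < m) {S : ℕ → ℤ}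
    (hS : ∀ t, S (t + m) = S t - 1) :
    ∃! s, s < m ∧ ∀ k < m, S s ≤ S (s + k) := by
  -- the first point of `[0, m)` where `S` is minimal
  obtain ⟨s, hs, hmin⟩ := exists_min_image (range m) (fun t => toLex (S t, t)) ⟨0, by simpa⟩
  replace hmin : ∀ u < m, S s < S u ∨ S s = S u ∧ s ≤ u := fun u hu =>
    Prod.Lex.toLex_le_toLex.mp (hmin u (mem_range.mpr hu))
  rw [mem_range] at hs
  have hgood : ∀ k < m, S s ≤ S (s + k) := fun k hk => by
    rcases lt_or_ge (s + k) m with hsk | hsk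
    · rcases hmin (s + k) hsk with h | h <;> omega
    · have := hS (s + k - m)
      rw [Nat.sub_add_cancel hsk] at this
      rcases hmin (s + k - m) (by omega) with h | h <;> omega
  refine ⟨s, ⟨hs, hgood⟩, fun u ⟨hu, hgood'⟩ => ?_⟩
  -- good points `a < b` would give `S a ≤ S b ≤ S (a + m) = S a - 1`
  have two_good : ∀ a b, a < b → b < m → (∀ k < m, S a ≤ S (a + k)) →
      (∀ k < m, S b ≤ S (b + k)) → False := fun a b hab hbm ha hb => by
    have h1 := ha (b - a) (by omega)
    have h2 := hb (a + m - b) (by omega)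
    rw [Nat.add_sub_cancel' hab.le] at h1
    rw [show b + (a + m - b) = a + m by omega, hS] at h2
    omega
  rcases lt_trichotomy u s with h | h | h
  · exact (two_good u s h hs hgood' hgood).elim
  · exact h
  · exact (two_good s u h hu hgood hgood').elim

section CircularParking

variable {n : ℕ}

def parkingExcess (f : Fin n → ZMod (n + 1)) (t : ℕ) : ℤ :=
  ∑ j ∈ range t, ((#{i | f i = j} : ℤ) - 1)

theorem card_filter_val_sub_lt (f : Fin n → ZMod (n + 1)) (s : ℕ) {k : ℕ} (hk : k ≤ n + 1) :
    #{i | (f i - s).val < k} = ∑ j ∈ range k, #{i | f i = ↑(s + j)} := by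
  rw [card_eq_sum_card_fiberwise (f := fun i => (f i - s).val) (t := range k)
    fun i hi => by simpa using hi]
  refine sum_congr rfl fun j hj => ?_
  have hjn : j < n + 1 := (mem_range.mp hj).trans_le hk
  rw [filter_filter]
  refine congrArg card (filter_congr fun i _ => ⟨?_, ?_⟩)
  · rintro ⟨-, h⟩
    rw [Nat.cast_add, ← h, ZMod.natCast_zmod_val, add_sub_cancel]
  · intro h
    rw [h, Nat.cast_add, add_sub_cancel_left, ZMod.val_cast_of_lt hjn]
    exact ⟨mem_range.mp hj, rfl⟩

theorem parkingExcess_add (f : Fin n → ZMod (n + 1)) (s : ℕ) {k : ℕ} (hk : k ≤ n + 1) :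
    parkingExcess f (s + k) = parkingExcess f s + #{i | (f i - s).val < k} - k := by
  simp only [parkingExcess, sum_range_add, card_filter_val_sub_lt f s hk, sum_sub_distrib,
    Nat.cast_sum, sum_const, card_range, nsmul_one]
  push_cast
  ring

theorem parkingExcess_add_period (f : Fin n → ZMod (n + 1)) (t : ℕ) :
    parkingExcess f (t + (n + 1)) = parkingExcess f t - 1 := by
  rw [parkingExcess_add f t le_rfl, filter_true_of_mem fun i _ => ZMod.val_lt _, card_univ,
    Fintype.card_fin]
  push_cast
  ring

theorem isPF_sub_iff (f : Fin n → ZMod (n + 1)) (s : ℕ) :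
    IsPF n (fun i => (f i - s).val) ↔
      ∀ k < n + 1, parkingExcess f s ≤ parkingExcess f (s + k) := by
  rw [isPF_iff_le_card_filter_lt]
  refine forall_congr' fun k => ⟨fun h hk => ?_, fun h hk => ?_⟩
  · have := h (by omega); rw [parkingExcess_add f s hk.le]; omega
  · have := h (by omega); rw [parkingExcess_add f s (by omega)] at this; omega

theorem existsUnique_isPF_add (f : Fin n → ZMod (n + 1)) :
    ∃! c : ZMod (n + 1), IsPF n (fun i => (c + f i).val) := by
  have hiff (c : ZMod (n + 1)) : IsPF n (fun i => (c + f i).val) ↔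
      ∀ k < n + 1, parkingExcess f (-c).val ≤ parkingExcess f ((-c).val + k) := by
    rw [← isPF_sub_iff, ZMod.natCast_zmod_val]
    simp only [sub_neg_eq_add, add_comm]
  obtain ⟨s, ⟨hs, hgood⟩, huniq⟩ :=
    existsUnique_forall_le_add_of_add_period n.succ_pos (parkingExcess_add_period f)
  refine ⟨-s, ?_, fun c hc => ?_⟩
  · exact (hiff _).mpr (by rwa [neg_neg, ZMod.val_cast_of_lt hs])
  · rw [← huniq _ ⟨ZMod.val_lt _, (hiff c).mp hc⟩, ZMod.natCast_zmod_val, neg_neg]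

end CircularParking

theorem card_isPF_zmod_mul (n : ℕ) :
    (n + 1) * Nat.card {f : Fin n → ZMod (n + 1) // IsPF n (fun i => (f i).val)} =
      (n + 1) ^ n := by
  have := Nat.card_mul_card_eq_of_existsUnique_vadd (G := ZMod (n + 1))
    (fun f : Fin n → ZMod (n + 1) => IsPF n (fun i => (f i).val)) existsUnique_isPF_add
  simpa [Nat.card_fun] using this

def isPFFinEquivZMod (n : ℕ) :
    {a : Fin n → Fin n // IsPF n (fun i => (a i : ℕ))} ≃
      {f : Fin n → ZMod (n + 1) // IsPF n (fun i => (f i).val)} where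
  toFun a := ⟨fun i => (a.1 i : ℕ), by
    simpa only [ZMod.val_cast_of_lt (Nat.lt_succ_of_lt (a.1 _).isLt)] using a.2⟩
  invFun f := ⟨fun i => ⟨(f.1 i).val, f.2.lt i⟩, f.2⟩
  left_inv a := Subtype.ext <| funext fun i =>
    Fin.ext (ZMod.val_cast_of_lt (Nat.lt_succ_of_lt (a.1 i).isLt))
  right_inv f := Subtype.ext <| funext fun i => ZMod.natCast_zmod_val (f.1 i)

theorem card_parking_functions (n : ℕ) :
    Nat.card {a : Fin n → Fin n // IsPF n (fun i => (a i : ℕ))} = (n + 1) ^ (n - 1) := by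
  apply Nat.eq_of_mul_eq_mul_left n.succ_pos
  rw [Nat.card_congr (isPFFinEquivZMod n), card_isPF_zmod_mul]
  cases n <;> simp [pow_succ']
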